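/- arXiv:math/0307374 — 4 statements merged into one kernel-verified Lean document; each statement's English description precedes it below -/
import Mathlib

section
/- Let f : Ω → ℝ be a smooth function on an open domain Ω ⊆ ℝⁿ whose Hessian matrix is invertible, with inverse (hⁱʲ(z)). Then the Riemann curvature of the Hessian metric g_{ij} = ∂²f/∂zⁱ∂zʲ vanishes if and only if f satisfies the associativity equations fᵢⱼₛ hˢᵗ fₜₖₗ = fₗⱼₛ hˢᵗ fₜₖᵢ for all indices i, j, k, l, where subscripts denote partial derivatives of f. -/
open scoped BigOperators

/-- Partial derivative in the `i`-th coordinate direction. -/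
noncomputable def pd {n : ℕ} (f : (Fin n → ℝ) → ℝ) (i : Fin n) (x : Fin n → ℝ) : ℝ :=
  fderiv ℝ f x (Pi.single i 1)

/-- The Hessian matrix of `f` at `x`. -/
noncomputable def hess {n : ℕ} (f : (Fin n → ℝ) → ℝ) (x : Fin n → ℝ) :
    Matrix (Fin n) (Fin n) ℝ :=
  fun i j => pd (pd f i) j x

/-- Third partial derivatives of `f`. -/
noncomputable def d3 {n : ℕ} (f : (Fin n → ℝ) → ℝ) (i j k : Fin n) (x : Fin n → ℝ) : ℝ :=
  pd (pd (pd f i) j) k x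

/-- Christoffel symbols `Γᵏᵢⱼ = (1/2) hᵏˢ fₛᵢⱼ` of the Hessian metric. -/
noncomputable def christoffel {n : ℕ} (f : (Fin n → ℝ) → ℝ) (k i j : Fin n)
    (x : Fin n → ℝ) : ℝ :=
  (1/2) * ∑ s, (hess f x)⁻¹ k s * d3 f s i j x

/-- Riemann curvature tensor `R^k_{ijl}` of the Hessian metric, computed from the
Christoffel symbols via the standard formula. -/
noncomputable def riemann {n : ℕ} (f : (Fin n → ℝ) → ℝ) (k i j l : Fin n)
    (x : Fin n → ℝ) : ℝ :=
  pd (christoffel f k j l) i x - pd (christoffel f k i l) j x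
    + ∑ s, (christoffel f k i s x * christoffel f s j l x
        - christoffel f k j s x * christoffel f s i l x)

set_option linter.unusedVariables false
set_option maxHeartbeats 1000000

section Aux
variable {n : ℕ} {Ω : Set (Fin n → ℝ)}

variable {n : ℕ} {Ω : Set (Fin n → ℝ)}

theorem pd_congr (hΩ : IsOpen Ω) {g1 g2 : (Fin n → ℝ) → ℝ} (h : Set.EqOn g1 g2 Ω) {x} (hx : x ∈ Ω) (i : Fin n) :
    pd g1 i x = pd g2 i x := by
  unfold pd
  rw [Filter.EventuallyEq.fderiv_eq (h.eventuallyEq_of_mem (hΩ.mem_nhds hx))]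

theorem pd_smooth (hΩ : IsOpen Ω) {g : (Fin n → ℝ) → ℝ} (hg : ContDiffOn ℝ (⊤ : ℕ∞) g Ω) (i : Fin n) :
    ContDiffOn ℝ (⊤ : ℕ∞) (pd g i) Ω := by
  have h1 : ContDiffOn ℝ (⊤ : ℕ∞) (fderiv ℝ g) Ω := hg.fderiv_of_isOpen hΩ (by simp)
  exact (ContinuousLinearMap.apply ℝ ℝ (Pi.single i 1 : Fin n → ℝ)).contDiff.comp_contDiffOn h1

theorem diffAt (hΩ : IsOpen Ω) {g : (Fin n → ℝ) → ℝ} (hg : ContDiffOn ℝ (⊤ : ℕ∞) g Ω) {x} (hx : x ∈ Ω) :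
    DifferentiableAt ℝ g x :=
  (hg.contDiffAt (hΩ.mem_nhds hx)).differentiableAt (by simp)

theorem pd_const (c : ℝ) (i : Fin n) (x : Fin n → ℝ) : pd (fun _ => c) i x = 0 := by
  simp [pd]

theorem pd_mul {a b : (Fin n → ℝ) → ℝ} {x} (ha : DifferentiableAt ℝ a x)
    (hb : DifferentiableAt ℝ b x) (i : Fin n) :
    pd (fun y => a y * b y) i x = pd a i x * b x + a x * pd b i x := by
  unfold pd; rw [fderiv_fun_mul ha hb]; simp; ring

theorem pd_sum {ι : Type*} {s : Finset ι} {F : ι → (Fin n → ℝ) → ℝ} {x}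
    (h : ∀ a ∈ s, DifferentiableAt ℝ (F a) x) (i : Fin n) :
    pd (fun y => ∑ a ∈ s, F a y) i x = ∑ a ∈ s, pd (F a) i x := by
  unfold pd; rw [fderiv_fun_sum h]; simp

theorem pd_const_mul {a : (Fin n → ℝ) → ℝ} {x} (ha : DifferentiableAt ℝ a x) (c : ℝ) (i : Fin n) :
    pd (fun y => c * a y) i x = c * pd a i x := by
  unfold pd; rw [fderiv_const_mul ha]; simp

theorem pd_pd_eq {g : (Fin n → ℝ) → ℝ} {x} (hg : DifferentiableAt ℝ (fderiv ℝ g) x) (i j : Fin n) :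
    pd (pd g i) j x = fderiv ℝ (fderiv ℝ g) x (Pi.single j 1) (Pi.single i 1) := by
  unfold pd
  rw [fderiv_clm_apply hg (differentiableAt_const _)]
  simp

theorem pd_comm (hΩ : IsOpen Ω) {g : (Fin n → ℝ) → ℝ} (hg : ContDiffOn ℝ (⊤ : ℕ∞) g Ω) {x} (hx : x ∈ Ω) (i j : Fin n) :
    pd (pd g i) j x = pd (pd g j) i x := by
  have hat : ContDiffAt ℝ (⊤ : ℕ∞) g x := hg.contDiffAt (hΩ.mem_nhds hx)
  have hd : DifferentiableAt ℝ (fderiv ℝ g) x :=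
    (hat.fderiv_right (m := 1) (by exact WithTop.coe_le_coe.mpr le_top)).differentiableAt one_ne_zero
  rw [pd_pd_eq hd, pd_pd_eq hd]
  exact (hat.isSymmSndFDerivAt (by rw [minSmoothness_of_isRCLikeNormedField]; exact WithTop.coe_le_coe.mpr le_top)).eq _ _


variable {f : (Fin n → ℝ) → ℝ}

theorem hess_smooth (hΩ : IsOpen Ω) (hf : ContDiffOn ℝ (⊤ : ℕ∞) f Ω) (a b : Fin n) :
    ContDiffOn ℝ (⊤ : ℕ∞) (fun y => hess f y a b) Ω :=
  pd_smooth hΩ (pd_smooth hΩ hf a) b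

theorem d3_smooth (hΩ : IsOpen Ω) (hf : ContDiffOn ℝ (⊤ : ℕ∞) f Ω) (i j k : Fin n) :
    ContDiffOn ℝ (⊤ : ℕ∞) (d3 f i j k) Ω :=
  pd_smooth hΩ (pd_smooth hΩ (pd_smooth hΩ hf i) j) k

theorem hess_symm (hΩ : IsOpen Ω) (hf : ContDiffOn ℝ (⊤ : ℕ∞) f Ω) {x} (hx : x ∈ Ω) (a b : Fin n) :
    hess f x a b = hess f x b a :=
  pd_comm hΩ hf hx a b

theorem d3_swap23 (hΩ : IsOpen Ω) (hf : ContDiffOn ℝ (⊤ : ℕ∞) f Ω) {x} (hx : x ∈ Ω) (i j k : Fin n) :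
    d3 f i j k x = d3 f i k j x :=
  pd_comm hΩ (pd_smooth hΩ hf i) hx j k

theorem d3_swap12 (hΩ : IsOpen Ω) (hf : ContDiffOn ℝ (⊤ : ℕ∞) f Ω) {x} (hx : x ∈ Ω) (i j k : Fin n) :
    d3 f i j k x = d3 f j i k x :=
  pd_congr hΩ (fun y hy => pd_comm hΩ hf hy i j) hx k

theorem d3_swap13 (hΩ : IsOpen Ω) (hf : ContDiffOn ℝ (⊤ : ℕ∞) f Ω) {x} (hx : x ∈ Ω) (i j k : Fin n) :
    d3 f i j k x = d3 f k j i x := by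
  rw [d3_swap23 hΩ hf hx, d3_swap12 hΩ hf hx, d3_swap23 hΩ hf hx]

theorem pd_d3_swap (hΩ : IsOpen Ω) (hf : ContDiffOn ℝ (⊤ : ℕ∞) f Ω) {x} (hx : x ∈ Ω) (s i j l : Fin n) :
    pd (d3 f s j l) i x = pd (d3 f s i l) j x := by
  show pd (pd (pd (pd f s) j) l) i x = pd (pd (pd (pd f s) i) l) j x
  rw [pd_comm hΩ (pd_smooth hΩ (pd_smooth hΩ hf s) j) hx l i,
      pd_comm hΩ (pd_smooth hΩ (pd_smooth hΩ hf s) i) hx l j]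
  exact pd_congr hΩ (fun y hy => pd_comm hΩ (pd_smooth hΩ hf s) hy j i) hx l



theorem det_smooth {M : (Fin n → ℝ) → Matrix (Fin n) (Fin n) ℝ}
    (hM : ∀ a b, ContDiffOn ℝ (⊤ : ℕ∞) (fun y => M y a b) Ω) :
    ContDiffOn ℝ (⊤ : ℕ∞) (fun y => (M y).det) Ω := by
  simp only [Matrix.det_apply']
  apply ContDiffOn.sum
  intro σ _
  exact contDiffOn_const.mul (contDiffOn_prod fun a _ => hM (σ a) a)

theorem adj_smooth {M : (Fin n → ℝ) → Matrix (Fin n) (Fin n) ℝ}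
    (hM : ∀ a b, ContDiffOn ℝ (⊤ : ℕ∞) (fun y => M y a b) Ω) (a b : Fin n) :
    ContDiffOn ℝ (⊤ : ℕ∞) (fun y => (M y).adjugate a b) Ω := by
  simp only [Matrix.adjugate_apply]
  apply det_smooth
  intro c d
  rcases eq_or_ne c b with h | h <;> simp [Matrix.updateRow_apply, h]
  · exact contDiffOn_const
  · exact hM c d

theorem inv_entry_eq (M : Matrix (Fin n) (Fin n) ℝ) (a b : Fin n) :
    M⁻¹ a b = (M.det)⁻¹ * M.adjugate a b := by
  rw [Matrix.inv_def, Ring.inverse_eq_inv]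
  simp [Matrix.smul_apply, smul_eq_mul]

theorem inv_smooth {M : (Fin n → ℝ) → Matrix (Fin n) (Fin n) ℝ}
    (hM : ∀ a b, ContDiffOn ℝ (⊤ : ℕ∞) (fun y => M y a b) Ω)
    (hU : ∀ y ∈ Ω, IsUnit (M y)) (a b : Fin n) :
    ContDiffOn ℝ (⊤ : ℕ∞) (fun y => (M y)⁻¹ a b) Ω := by
  have hne : ∀ y ∈ Ω, (M y).det ≠ 0 := fun y hy =>
    ((Matrix.isUnit_iff_isUnit_det _).mp (hU y hy)).ne_zero
  have : ContDiffOn ℝ (⊤ : ℕ∞) (fun y => ((M y).det)⁻¹ * (M y).adjugate a b) Ω :=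
    ((det_smooth hM).inv hne).mul (adj_smooth hM a b)
  exact this.congr fun y _ => inv_entry_eq (M y) a b


end Aux
section Deriv
variable {n : ℕ} {Ω : Set (Fin n → ℝ)} {f : (Fin n → ℝ) → ℝ}

theorem hinv_symm (hΩ : IsOpen Ω) (hf : ContDiffOn ℝ (⊤ : ℕ∞) f Ω) {x} (hx : x ∈ Ω) (a b : Fin n) :
    (hess f x)⁻¹ a b = (hess f x)⁻¹ b a := by
  have hsym : (hess f x).transpose = hess f x := by
    ext c d
    simp only [Matrix.transpose_apply]
    exact hess_symm hΩ hf hx d c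
  calc (hess f x)⁻¹ a b = ((hess f x)⁻¹).transpose b a := rfl
    _ = ((hess f x).transpose)⁻¹ b a := by rw [Matrix.transpose_nonsing_inv]
    _ = (hess f x)⁻¹ b a := by rw [hsym]

theorem pd_hinv (hΩ : IsOpen Ω) (hf : ContDiffOn ℝ (⊤ : ℕ∞) f Ω) (hH : ∀ x ∈ Ω, IsUnit (hess f x))
    {x} (hx : x ∈ Ω) (a b i : Fin n) :
    pd (fun y => (hess f y)⁻¹ a b) i x
      = -∑ s, ∑ t, (hess f x)⁻¹ a s * d3 f s t i x * (hess f x)⁻¹ t b := by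
  have hdet : ∀ y ∈ Ω, IsUnit (hess f y).det := fun y hy =>
    (Matrix.isUnit_iff_isUnit_det _).mp (hH y hy)
  have hdH : ∀ c d : Fin n, DifferentiableAt ℝ (fun y => hess f y c d) x :=
    fun c d => diffAt hΩ (hess_smooth hΩ hf c d) hx
  have hdI : ∀ c d : Fin n, DifferentiableAt ℝ (fun y => (hess f y)⁻¹ c d) x :=
    fun c d => diffAt hΩ (inv_smooth (hess_smooth hΩ hf) hH c d) hx
  have key : ∀ c : Fin n, ∑ t, hess f x c t * pd (fun y => (hess f y)⁻¹ t b) i x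
      = -∑ t, d3 f c t i x * (hess f x)⁻¹ t b := by
    intro c
    have h0 : Set.EqOn (fun y => ∑ t, hess f y c t * (hess f y)⁻¹ t b)
        (fun _ => (1 : Matrix (Fin n) (Fin n) ℝ) c b) Ω := by
      intro y hy
      show ∑ t, hess f y c t * (hess f y)⁻¹ t b = _
      rw [← Matrix.mul_apply, Matrix.mul_nonsing_inv _ (hdet y hy)]
    have h1 : pd (fun y => ∑ t, hess f y c t * (hess f y)⁻¹ t b) i x = 0 := by
      rw [pd_congr hΩ h0 hx i, pd_const]
    rw [pd_sum (fun t _ => (hdH c t).fun_mul (hdI t b)) i] at h1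
    rw [Finset.sum_congr rfl fun t _ => pd_mul (hdH c t) (hdI t b) i,
      Finset.sum_add_distrib] at h1
    have h1' : ∑ t, d3 f c t i x * (hess f x)⁻¹ t b
        + ∑ t, hess f x c t * pd (fun y => (hess f y)⁻¹ t b) i x = 0 := h1
    linarith [h1']
  have e1 : pd (fun y => (hess f y)⁻¹ a b) i x
      = ∑ s, (hess f x)⁻¹ a s * ∑ t, hess f x s t * pd (fun y => (hess f y)⁻¹ t b) i x := by
    have hid : ∀ t : Fin n, (∑ s, (hess f x)⁻¹ a s * hess f x s t) = if a = t then (1:ℝ) else 0 := by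
      intro t
      rw [← Matrix.mul_apply, Matrix.nonsing_inv_mul _ (hdet x hx), Matrix.one_apply]
    calc pd (fun y => (hess f y)⁻¹ a b) i x
        = ∑ t, (if a = t then (1:ℝ) else 0) * pd (fun y => (hess f y)⁻¹ t b) i x := by
          simp [ite_mul, Finset.sum_ite_eq]
      _ = ∑ t, (∑ s, (hess f x)⁻¹ a s * hess f x s t) * pd (fun y => (hess f y)⁻¹ t b) i x := by
          simp only [hid]
      _ = _ := by
          simp only [Finset.sum_mul, Finset.mul_sum, mul_assoc]
          exact Finset.sum_comm
  rw [e1, Finset.sum_congr rfl fun s _ => by rw [key s]]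
  simp only [mul_neg, Finset.mul_sum, mul_assoc]
  rw [← Finset.sum_neg_distrib]

end Deriv
noncomputable def ctens {n : ℕ} (f : (Fin n → ℝ) → ℝ) (x : Fin n → ℝ) (i j k l : Fin n) : ℝ :=
  ∑ s, ∑ t, d3 f i j s x * (hess f x)⁻¹ s t * d3 f t k l x

section Main
variable {n : ℕ} {Ω : Set (Fin n → ℝ)} {f : (Fin n → ℝ) → ℝ}

theorem tri_comm (F : Fin n → Fin n → Fin n → ℝ) :
    ∑ s, ∑ a, ∑ t, F s a t = ∑ a, ∑ t, ∑ s, F s a t := by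
  rw [Finset.sum_comm]
  exact Finset.sum_congr rfl fun a _ => Finset.sum_comm

theorem pd_christoffel (hΩ : IsOpen Ω) (hf : ContDiffOn ℝ (⊤ : ℕ∞) f Ω)
    (hH : ∀ x ∈ Ω, IsUnit (hess f x)) {x} (hx : x ∈ Ω) (k j l i : Fin n) :
    pd (christoffel f k j l) i x = (1/2) * ∑ s,
      (pd (fun y => (hess f y)⁻¹ k s) i x * d3 f s j l x
        + (hess f x)⁻¹ k s * pd (d3 f s j l) i x) := by
  have hdI : ∀ c d : Fin n, DifferentiableAt ℝ (fun y => (hess f y)⁻¹ c d) x :=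
    fun c d => diffAt hΩ (inv_smooth (hess_smooth hΩ hf) hH c d) hx
  have hdD : ∀ s : Fin n, DifferentiableAt ℝ (d3 f s j l) x :=
    fun s => diffAt hΩ (d3_smooth hΩ hf s j l) hx
  have hterm : ∀ s : Fin n, DifferentiableAt ℝ (fun y => (hess f y)⁻¹ k s * d3 f s j l y) x :=
    fun s => (hdI k s).mul (hdD s)
  show pd (fun y => (1/2) * ∑ s, (hess f y)⁻¹ k s * d3 f s j l y) i x = _
  rw [pd_const_mul (DifferentiableAt.fun_sum fun s _ => hterm s) (1/2) i,
     pd_sum (fun s _ => hterm s) i,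
     Finset.sum_congr rfl fun s _ => pd_mul (hdI k s) (hdD s) i]

end Main
section Main2
variable {n : ℕ} {Ω : Set (Fin n → ℝ)} {f : (Fin n → ℝ) → ℝ}

theorem T1_eq_ct (x : Fin n → ℝ) (k i j l : Fin n) :
    (∑ a, ∑ s, ∑ t, (hess f x)⁻¹ k a * d3 f a i s x * (hess f x)⁻¹ s t * d3 f t j l x)
      = ∑ a, (hess f x)⁻¹ k a * ctens f x a i j l := by
  refine Finset.sum_congr rfl fun a _ => ?_
  rw [ctens, Finset.mul_sum]
  refine Finset.sum_congr rfl fun s _ => ?_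
  rw [Finset.mul_sum]
  refine Finset.sum_congr rfl fun t _ => by ring

theorem pd_christoffel' (hΩ : IsOpen Ω) (hf : ContDiffOn ℝ (⊤ : ℕ∞) f Ω)
    (hH : ∀ x ∈ Ω, IsUnit (hess f x)) {x} (hx : x ∈ Ω) (k j l i : Fin n) :
    pd (christoffel f k j l) i x
      = -(1/2) * (∑ a, ∑ s, ∑ t, (hess f x)⁻¹ k a * d3 f a i s x * (hess f x)⁻¹ s t * d3 f t j l x)
        + (1/2) * ∑ s, (hess f x)⁻¹ k s * pd (d3 f s j l) i x := by
  rw [pd_christoffel hΩ hf hH hx k j l i, Finset.sum_add_distrib, mul_add]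
  congr 1
  rw [Finset.sum_congr rfl fun s _ => by rw [pd_hinv hΩ hf hH hx k s i]]
  have e1 : (∑ s, (-∑ a, ∑ t, (hess f x)⁻¹ k a * d3 f a t i x * (hess f x)⁻¹ t s) * d3 f s j l x)
      = -∑ s, ∑ a, ∑ t, ((hess f x)⁻¹ k a * d3 f a t i x * (hess f x)⁻¹ t s) * d3 f s j l x := by
    rw [← Finset.sum_neg_distrib]
    refine Finset.sum_congr rfl fun s _ => ?_
    rw [neg_mul, Finset.sum_mul]
    congr 1
    exact Finset.sum_congr rfl fun a _ => Finset.sum_mul _ _ _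
  rw [e1]
  have e2 : (∑ s, ∑ a, ∑ t, ((hess f x)⁻¹ k a * d3 f a t i x * (hess f x)⁻¹ t s) * d3 f s j l x)
      = ∑ a, ∑ s, ∑ t, (hess f x)⁻¹ k a * d3 f a i s x * (hess f x)⁻¹ s t * d3 f t j l x := by
    have e3 : (∑ s, ∑ a, ∑ t, ((hess f x)⁻¹ k a * d3 f a t i x * (hess f x)⁻¹ t s) * d3 f s j l x)
        = ∑ s, ∑ a, ∑ t, (hess f x)⁻¹ k a * d3 f a i t x * (hess f x)⁻¹ t s * d3 f s j l x := by
      refine Finset.sum_congr rfl fun s _ => Finset.sum_congr rfl fun a _ =>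
        Finset.sum_congr rfl fun t _ => ?_
      rw [show d3 f a t i x = d3 f a i t x from d3_swap23 hΩ hf hx a t i]
    rw [e3, tri_comm]
  rw [e2]
  ring

theorem quad_eq (hΩ : IsOpen Ω) (hf : ContDiffOn ℝ (⊤ : ℕ∞) f Ω) {x} (hx : x ∈ Ω) (k i j l : Fin n) :
    (∑ s, christoffel f k i s x * christoffel f s j l x)
      = (1/4) * ∑ a, ∑ s, ∑ t, (hess f x)⁻¹ k a * d3 f a i s x * (hess f x)⁻¹ s t * d3 f t j l x := by
  simp only [christoffel]
  have e1 : ∀ s : Fin n,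
      ((1/2) * ∑ a, (hess f x)⁻¹ k a * d3 f a i s x) * ((1/2) * ∑ b, (hess f x)⁻¹ s b * d3 f b j l x)
      = (1/4) * ∑ a, ∑ b, (hess f x)⁻¹ k a * d3 f a i s x * (hess f x)⁻¹ s b * d3 f b j l x := by
    intro s
    calc ((1/2) * ∑ a, (hess f x)⁻¹ k a * d3 f a i s x)
          * ((1/2) * ∑ b, (hess f x)⁻¹ s b * d3 f b j l x)
        = (1/4) * ((∑ a, (hess f x)⁻¹ k a * d3 f a i s x)
          * (∑ b, (hess f x)⁻¹ s b * d3 f b j l x)) := by ring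
      _ = (1/4) * ∑ a, ∑ b, (hess f x)⁻¹ k a * d3 f a i s x * (hess f x)⁻¹ s b * d3 f b j l x := by
          rw [Finset.sum_mul_sum]
          refine congrArg _ (Finset.sum_congr rfl fun a _ => Finset.sum_congr rfl fun b _ => by ring)
  rw [Finset.sum_congr rfl fun s _ => e1 s, ← Finset.mul_sum]
  congr 1
  exact Finset.sum_comm

end Main2
section Main3
variable {n : ℕ} {Ω : Set (Fin n → ℝ)} {f : (Fin n → ℝ) → ℝ}

theorem riemann_eq (hΩ : IsOpen Ω) (hf : ContDiffOn ℝ (⊤ : ℕ∞) f Ω)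
    (hH : ∀ x ∈ Ω, IsUnit (hess f x)) {x} (hx : x ∈ Ω) (k i j l : Fin n) :
    riemann f k i j l x
      = -(1/4) * ∑ a, (hess f x)⁻¹ k a * (ctens f x a i j l - ctens f x a j i l) := by
  have hU : (∑ s, (hess f x)⁻¹ k s * pd (d3 f s j l) i x)
      = ∑ s, (hess f x)⁻¹ k s * pd (d3 f s i l) j x :=
    Finset.sum_congr rfl fun s _ => by rw [pd_d3_swap hΩ hf hx s i j l]
  have hRHS : (∑ a, (hess f x)⁻¹ k a * (ctens f x a i j l - ctens f x a j i l))
      = (∑ a, (hess f x)⁻¹ k a * ctens f x a i j l)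
        - ∑ a, (hess f x)⁻¹ k a * ctens f x a j i l := by
    rw [← Finset.sum_sub_distrib]
    exact Finset.sum_congr rfl fun a _ => mul_sub _ _ _
  rw [riemann, pd_christoffel' hΩ hf hH hx k j l i, pd_christoffel' hΩ hf hH hx k i l j,
    Finset.sum_sub_distrib, quad_eq hΩ hf hx k i j l, quad_eq hΩ hf hx k j i l,
    T1_eq_ct x k i j l, T1_eq_ct x k j i l, hU, hRHS]
  ring

theorem ct12 (hΩ : IsOpen Ω) (hf : ContDiffOn ℝ (⊤ : ℕ∞) f Ω) {x} (hx : x ∈ Ω) (i j k l : Fin n) :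
    ctens f x i j k l = ctens f x j i k l :=
  Finset.sum_congr rfl fun s _ => Finset.sum_congr rfl fun t _ => by
    rw [d3_swap12 hΩ hf hx i j s]

theorem ct34 (hΩ : IsOpen Ω) (hf : ContDiffOn ℝ (⊤ : ℕ∞) f Ω) {x} (hx : x ∈ Ω) (i j k l : Fin n) :
    ctens f x i j k l = ctens f x i j l k :=
  Finset.sum_congr rfl fun s _ => Finset.sum_congr rfl fun t _ => by
    rw [d3_swap23 hΩ hf hx t k l]

theorem d3_cycle (hΩ : IsOpen Ω) (hf : ContDiffOn ℝ (⊤ : ℕ∞) f Ω) {x} (hx : x ∈ Ω) (i j k : Fin n) :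
    d3 f i j k x = d3 f k i j x := by
  rw [d3_swap13 hΩ hf hx, d3_swap23 hΩ hf hx]

theorem ctpair (hΩ : IsOpen Ω) (hf : ContDiffOn ℝ (⊤ : ℕ∞) f Ω) {x} (hx : x ∈ Ω) (i j k l : Fin n) :
    ctens f x i j k l = ctens f x k l i j := by
  rw [ctens, ctens, Finset.sum_comm]
  refine Finset.sum_congr rfl fun s _ => Finset.sum_congr rfl fun t _ => ?_
  rw [d3_cycle hΩ hf hx k l s, ← d3_cycle hΩ hf hx i j t, hinv_symm hΩ hf hx t s]
  ring

theorem extract (hH : ∀ x ∈ Ω, IsUnit (hess f x)) {x} (hx : x ∈ Ω) {E : Fin n → ℝ}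
    (h : ∀ k, ∑ a, (hess f x)⁻¹ k a * E a = 0) (p : Fin n) : E p = 0 := by
  have hdet : IsUnit (hess f x).det := (Matrix.isUnit_iff_isUnit_det _).mp (hH x hx)
  have e0 : ∑ k, hess f x p k * ∑ a, (hess f x)⁻¹ k a * E a = 0 := by simp [h]
  have e1 : ∑ k, hess f x p k * ∑ a, (hess f x)⁻¹ k a * E a = E p := by
    calc ∑ k, hess f x p k * ∑ a, (hess f x)⁻¹ k a * E a
        = ∑ a, (∑ k, hess f x p k * (hess f x)⁻¹ k a) * E a := by
          simp only [Finset.mul_sum]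
          rw [Finset.sum_comm]
          refine Finset.sum_congr rfl fun a _ => ?_
          rw [Finset.sum_mul]
          exact Finset.sum_congr rfl fun k _ => (mul_assoc _ _ _).symm
      _ = ∑ a, (if p = a then (1:ℝ) else 0) * E a := by
          refine Finset.sum_congr rfl fun a _ => ?_
          rw [← Matrix.mul_apply, Matrix.mul_nonsing_inv _ hdet, Matrix.one_apply]
      _ = E p := by simp [ite_mul, Finset.sum_ite_eq]
  rw [← e1, e0]

end Main3

/-- For a smooth function `f` on an open set `Ω ⊆ ℝⁿ` with invertible
Hessian, the curvature of the Hessian metric `g_{ij} = ∂²f/∂zⁱ∂zʲ` vanishes iff `f`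
satisfies the associativity equations `fᵢⱼₛ hˢᵗ fₜₖₗ = fₗⱼₛ hˢᵗ fₜₖᵢ`. -/
theorem stmt_1 {n : ℕ} (Ω : Set (Fin n → ℝ)) (hΩ : IsOpen Ω)
    (f : (Fin n → ℝ) → ℝ) (hf : ContDiffOn ℝ (⊤ : ℕ∞) f Ω)
    (hH : ∀ x ∈ Ω, IsUnit (hess f x)) :
    (∀ x ∈ Ω, ∀ k i j l, riemann f k i j l x = 0) ↔
    (∀ x ∈ Ω, ∀ i j k l,
      ∑ s, ∑ t, d3 f i j s x * (hess f x)⁻¹ s t * d3 f t k l x =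
      ∑ s, ∑ t, d3 f l j s x * (hess f x)⁻¹ s t * d3 f t k i x) := by
  constructor
  · intro hR x hx i j k l
    have h23 : ∀ p a b c, ctens f x p a b c = ctens f x p b a c := by
      intro p a b c
      have hRc : ∀ k', ∑ q, (hess f x)⁻¹ k' q * (ctens f x q a b c - ctens f x q b a c) = 0 := by
        intro k'
        have h0 := hR x hx k' a b c
        rw [riemann_eq hΩ hf hH hx k' a b c] at h0
        linarith [h0]
      have h1 := extract hH hx hRc p
      linarith [h1]
    show ctens f x i j k l = ctens f x l j k i
    calc ctens f x i j k l = ctens f x k l i j := ctpair hΩ hf hx i j k l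
      _ = ctens f x k i l j := h23 k l i j
      _ = ctens f x l j k i := ctpair hΩ hf hx k i l j
  · intro hA x hx k i j l
    have h14 : ∀ a b c d, ctens f x a b c d = ctens f x d b c a := fun a b c d => hA x hx a b c d
    have h23 : ∀ a b c d, ctens f x a b c d = ctens f x a c b d := by
      intro a b c d
      calc ctens f x a b c d = ctens f x b a c d := ct12 hΩ hf hx a b c d
        _ = ctens f x d a c b := h14 b a c d
        _ = ctens f x d a b c := ct34 hΩ hf hx d a c b
        _ = ctens f x c a b d := h14 d a b c
        _ = ctens f x a c b d := ct12 hΩ hf hx c a b d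
    rw [riemann_eq hΩ hf hH hx k i j l]
    have hz : ∀ a, ctens f x a i j l - ctens f x a j i l = 0 :=
      fun a => sub_eq_zero.mpr (h23 a i j l)
    simp [hz]
end

section
/- Let A be a finite-dimensional commutative Frobenius algebra over ℝ with basis e₁,…,e_n and unity e. Define F*(x) = (1/2)⟨x², log x²⟩ on the set of invertible elements x of A for which log x² is defined (e.g. x in a neighborhood of e). Then the third derivatives of F* satisfy ∂³F*/∂xᵅ∂xᵝ∂xᵞ = 2⟨e_α·e_β·e_γ, x⁻¹⟩. -/
open scoped BigOperators

/-!
By invariance, `B u v = τ (u * v)` for the linear functional `τ = B 1`, so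
`F* (x) = ½ τ (x² L (x²))`. Since `d (L (x²)) = 2 x⁻¹ dx`, the `B`-gradient of `F*` is
`x L (x²) + x`, its Hessian is multiplication by `L (x²) + 3`, and one more derivative
gives multiplication by `2 x⁻¹`.
-/

open ContinuousLinearMap

section LogOfSquare

variable {𝕜 A : Type*} [NontriviallyNormedField 𝕜] [NormedCommRing A] [NormedAlgebra 𝕜 A]
  {L : A → A} {x : A}

theorem hasFDerivAt_mul_self :
    HasFDerivAt (fun y : A => y * y) (mul 𝕜 A (2 * x)) x := by
  refine ((hasFDerivAt_id x).mul (hasFDerivAt_id x)).congr_fderiv ?_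
  ext h
  simp only [add_apply, FunLike.coe_smul, coe_id', Pi.smul_apply, id_eq, smul_eq_mul, mul_apply']
  ring

theorem hasFDerivAt_comp_mul_self (hx : IsUnit x)
    (hL : HasFDerivAt L (mul 𝕜 A (Ring.inverse (x * x))) (x * x)) :
    HasFDerivAt (fun y => L (y * y)) (mul 𝕜 A (2 * Ring.inverse x)) x := by
  refine (hL.comp (f := fun y => y * y) x hasFDerivAt_mul_self).congr_fderiv ?_
  ext h
  simp only [coe_comp, Function.comp_apply, mul_apply', Ring.mul_inverse_rev]
  calc Ring.inverse x * Ring.inverse x * (2 * x * h)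
      = 2 * (Ring.inverse x * (Ring.inverse x * x)) * h := by ring
    _ = 2 * Ring.inverse x * h := by rw [Ring.inverse_mul_cancel x hx, mul_one]

theorem hasFDerivAt_mul_self_mul_comp_mul_self (hx : IsUnit x)
    (hL : HasFDerivAt L (mul 𝕜 A (Ring.inverse (x * x))) (x * x)) :
    HasFDerivAt (fun y => y * y * L (y * y)) (mul 𝕜 A (2 * (x * L (x * x) + x))) x := by
  refine (hasFDerivAt_mul_self.mul (hasFDerivAt_comp_mul_self hx hL)).congr_fderiv ?_
  ext h
  simp only [add_apply, FunLike.coe_smul, Pi.smul_apply, smul_eq_mul, mul_apply']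
  calc x * x * (2 * Ring.inverse x * h) + L (x * x) * (2 * x * h)
      = 2 * (x * (x * Ring.inverse x)) * h + 2 * (x * L (x * x)) * h := by ring
    _ = 2 * (x * L (x * x) + x) * h := by rw [Ring.mul_inverse_cancel x hx]; ring

theorem hasFDerivAt_mul_comp_mul_self_add_self (hx : IsUnit x)
    (hL : HasFDerivAt L (mul 𝕜 A (Ring.inverse (x * x))) (x * x)) :
    HasFDerivAt (fun y => y * L (y * y) + y) (mul 𝕜 A (L (x * x) + 3)) x := by
  refine (((hasFDerivAt_id x).mul (hasFDerivAt_comp_mul_self hx hL)).add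
    (hasFDerivAt_id x)).congr_fderiv ?_
  ext h
  simp only [add_apply, FunLike.coe_smul, coe_id', Pi.smul_apply, id_eq, smul_eq_mul, mul_apply']
  calc x * (2 * Ring.inverse x * h) + L (x * x) * h + h
      = 2 * (x * Ring.inverse x) * h + L (x * x) * h + h := by ring
    _ = (L (x * x) + 3) * h := by rw [Ring.mul_inverse_cancel x hx]; ring

end LogOfSquare

section Coordinates

variable {n : ℕ} {E : Type*} [NormedAddCommGroup E] [NormedSpace ℝ E]

theorem eqOn_pd_comp {g g' : E → ℝ} {D : E → E →L[ℝ] ℝ} {W : Set E}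
    (Φ : (Fin n → ℝ) →L[ℝ] E) (i : Fin n) (hg : ∀ x ∈ W, HasFDerivAt g (D x) x)
    (hD : ∀ x ∈ W, D x (Φ (Pi.single i 1)) = g' x) :
    Set.EqOn (pd (g ∘ Φ) i) (g' ∘ Φ) (Φ ⁻¹' W) := by
  intro c hc
  rw [pd, ((hg _ hc).comp c Φ.hasFDerivAt).fderiv]
  exact hD _ hc

theorem Set.EqOn.pd {f g : (Fin n → ℝ) → ℝ} {V : Set (Fin n → ℝ)} (hV : IsOpen V)
    (h : Set.EqOn f g V) (i : Fin n) : Set.EqOn (pd f i) (pd g i) V := by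
  intro c hc
  rw [_root_.pd, _root_.pd, (h.eventuallyEq_of_mem (hV.mem_nhds hc)).fderiv_eq]

end Coordinates

theorem LinearMap.BilinForm.apply_eq_apply_one_mul {R A : Type*} [CommSemiring R]
    [NonAssocSemiring A] [Module R A] {B : LinearMap.BilinForm R A}
    (hB : ∀ u v w : A, B (u * v) w = B u (v * w)) (u v : A) : B u v = B 1 (u * v) := by
  rw [← hB, one_mul]

section FrobeniusPotential

variable {n : ℕ} {A : Type*} [NormedCommRing A] [NormedAlgebra ℝ A]

noncomputable def frobeniusPotential (τ : A →L[ℝ] ℝ) (L : A → A) (x : A) : ℝ :=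
  1 / 2 * τ (x * x * L (x * x))

theorem pd_pd_pd_frobeniusPotential_comp (τ : A →L[ℝ] ℝ) {L : A → A} {U : Set A}
    (hU : IsOpen U) (hUinv : ∀ y ∈ U, IsUnit y)
    (hL : ∀ y ∈ U, HasFDerivAt L (mul ℝ A (Ring.inverse y)) y)
    {Φ : (Fin n → ℝ) →L[ℝ] A} {v : Fin n → A} (hΦ : ∀ i, Φ (Pi.single i 1) = v i)
    {c : Fin n → ℝ} (hc : Φ c * Φ c ∈ U) (α β γ : Fin n) :
    pd (pd (pd (frobeniusPotential τ L ∘ Φ) α) β) γ c =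
      2 * τ (v α * v β * v γ * Ring.inverse (Φ c)) := by
  have hτ2 (z : A) : τ (2 * z) = 2 * τ z := by rw [two_mul, map_add, two_mul]
  let W : Set A := {y | y * y ∈ U}
  have hV : IsOpen (Φ ⁻¹' W) :=
    (hU.preimage (continuous_id.mul continuous_id)).preimage Φ.continuous
  have hunit (y : A) (hy : y ∈ W) : IsUnit y := isUnit_of_mul_isUnit_left (hUinv _ hy)
  have hgrad : Set.EqOn (pd (frobeniusPotential τ L ∘ Φ) α)
      ((fun y => τ (v α * (y * L (y * y) + y))) ∘ Φ) (Φ ⁻¹' W) := by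
    refine eqOn_pd_comp Φ α (fun y hy => (τ.hasFDerivAt.comp y
      (hasFDerivAt_mul_self_mul_comp_mul_self (hunit y hy) (hL _ hy))).const_mul (1 / 2))
      (fun y _ => ?_)
    simp only [hΦ, smul_apply, coe_comp, Function.comp_apply, mul_apply', smul_eq_mul, mul_assoc,
      hτ2, mul_comm (v α)]
    ring
  have hhess : Set.EqOn (pd (pd (frobeniusPotential τ L ∘ Φ) α) β)
      ((fun y => τ (v α * v β * (L (y * y) + 3))) ∘ Φ) (Φ ⁻¹' W) := by
    refine (hgrad.pd hV β).trans (eqOn_pd_comp Φ β (fun y hy => τ.hasFDerivAt.comp y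
      ((hasFDerivAt_mul_comp_mul_self_add_self (hunit y hy) (hL _ hy)).const_mul (v α)))
      (fun y _ => ?_))
    simp only [hΦ, smul_apply, coe_comp, Function.comp_apply, mul_apply', smul_eq_mul]
    ring_nf
  have hthird : pd (pd (pd (frobeniusPotential τ L ∘ Φ) α) β) γ c =
      τ (v α * v β * (2 * Ring.inverse (Φ c) * v γ)) :=
    (hhess.pd hV γ).trans (eqOn_pd_comp Φ γ
      (g' := fun y => τ (v α * v β * (2 * Ring.inverse y * v γ))) (fun y hy => τ.hasFDerivAt.comp y (((hasFDerivAt_comp_mul_self (hunit y hy)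
        (hL _ hy)).add_const 3).const_mul (v α * v β))) (fun y _ => by simp [hΦ])) hc
  rw [hthird, ← hτ2]
  ring_nf

end FrobeniusPotential

theorem stmt_5_general {n : ℕ} (A : Type*) [NormedCommRing A] [NormedAlgebra ℝ A]
    [FiniteDimensional ℝ A]
    (B : LinearMap.BilinForm ℝ A)
    (hBinv : ∀ u v w : A, B (u * v) w = B u (v * w))
    (e : Module.Basis (Fin n) ℝ A)
    (U : Set A) (hU : IsOpen U) (hUinv : ∀ y ∈ U, IsUnit y)
    (L : A → A)
    (hL : ∀ y ∈ U, HasFDerivAt L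
      (LinearMap.toContinuousLinearMap (LinearMap.mulLeft ℝ (Ring.inverse y))) y)
    (Fc : (Fin n → ℝ) → ℝ)
    (hFc : ∀ c, Fc c = (1/2) * B ((∑ i, c i • e i) * (∑ i, c i • e i))
        (L ((∑ i, c i • e i) * (∑ i, c i • e i)))) :
    ∀ c : Fin n → ℝ, IsUnit (∑ i, c i • e i) →
      (∑ i, c i • e i) * (∑ i, c i • e i) ∈ U →
      ∀ α β γ : Fin n,
        pd (pd (pd Fc α) β) γ c =
          2 * B (e α * e β * e γ) (Ring.inverse (∑ i, c i • e i)) := by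
  intro c _ hcU α β γ
  let Φ : (Fin n → ℝ) →L[ℝ] A := e.equivFun.symm.toContinuousLinearEquiv
  have hΦ (c : Fin n → ℝ) : Φ c = ∑ i, c i • e i := e.equivFun_symm_apply c
  have hΦe (i : Fin n) : Φ (Pi.single i 1) = e i := by simp [Φ]
  let τ : A →L[ℝ] ℝ := (B 1).toContinuousLinearMap
  have hB (u v : A) : B u v = τ (u * v) := B.apply_eq_apply_one_mul hBinv u v
  have hF : Fc = frobeniusPotential τ L ∘ Φ := by
    funext c
    simp only [hFc, Function.comp_apply, frobeniusPotential, hΦ, hB]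
  rw [← hΦ] at hcU ⊢
  rw [hF, pd_pd_pd_frobeniusPotential_comp τ hU hUinv hL hΦe hcU, hB]

/-- Let `A` be a finite-dimensional commutative Frobenius algebra over `ℝ`
with basis `e₁,…,e_n`, invariant form `B`, and let `L` be the logarithm (characterized by
its functional-calculus derivative `dL(y) = (multiplication by y⁻¹)` on an open set `U`
of invertible elements).  Then the third derivatives of `F*(x) = (1/2)⟨x², log x²⟩,`
viewed as a function of the coordinates `xᵅ`, satisfy
`∂³F*/∂xᵅ∂xᵝ∂xᵞ = 2⟨e_α·e_β·e_γ, x⁻¹⟩`. -/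
theorem stmt_5 {n : ℕ} (A : Type*) [NormedCommRing A] [NormedAlgebra ℝ A]
    [FiniteDimensional ℝ A]
    (B : LinearMap.BilinForm ℝ A) (hsymm : B.IsSymm) (hnd : B.Nondegenerate)
    (hBinv : ∀ u v w : A, B (u * v) w = B u (v * w))
    (e : Module.Basis (Fin n) ℝ A)
    (U : Set A) (hU : IsOpen U) (hUinv : ∀ y ∈ U, IsUnit y)
    (L : A → A)
    (hL : ∀ y ∈ U, HasFDerivAt L
      (LinearMap.toContinuousLinearMap (LinearMap.mulLeft ℝ (Ring.inverse y))) y)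
    (Fc : (Fin n → ℝ) → ℝ)
    (hFc : ∀ c, Fc c = (1/2) * B ((∑ i, c i • e i) * (∑ i, c i • e i))
        (L ((∑ i, c i • e i) * (∑ i, c i • e i)))) :
    ∀ c : Fin n → ℝ, IsUnit (∑ i, c i • e i) →
      (∑ i, c i • e i) * (∑ i, c i • e i) ∈ U →
      ∀ α β γ : Fin n,
        pd (pd (pd Fc α) β) γ c =
          2 * B (e α * e β * e γ) (Ring.inverse (∑ i, c i • e i)) :=
  stmt_5_general A B hBinv e U hU hUinv L hL Fc hFc
end

section
/- Functions p̃ : U × ℂ → ℂ satisfying the Euler–Poisson–Darboux system ∂ᵢ∂ⱼ p̃ = −(ν/(xᵢ−xⱼ))(∂ᵢp̃ − ∂ⱼp̃) for i ≠ j on the configuration space U = {x ∈ ℝⁿ⁺¹ : xᵢ ≠ xⱼ for i≠j} form a compatible overdetermined system; i.e., the mixed third partial derivatives computed in either order via the system agree: applying ∂_k to the (i,j)-equation and ∂_j to the (i,k)-equation (for distinct i,j,k) yields the same expression for ∂ᵢ∂ⱼ∂ₖ p̃, given the second-order equations hold. -/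
open scoped BigOperators

/-- Partial derivative (over `ℝ`) of a `ℂ`-valued function in the `i`-th direction. -/
noncomputable def pdc {N : ℕ} (f : (Fin N → ℝ) → ℂ) (i : Fin N) (x : Fin N → ℝ) : ℂ :=
  fderiv ℝ f x (Pi.single i 1)

lemma pdc_R_key {n : ℕ} (ν : ℂ)
    (Ω : Set (Fin (n + 1) → ℝ)) (hΩ : IsOpen Ω)
    (hconf : ∀ x ∈ Ω, ∀ i j : Fin (n + 1), i ≠ j → x i ≠ x j)
    (p : (Fin (n + 1) → ℝ) → ℂ) (hp : ContDiffOn ℝ 3 p Ω)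
    (R : Fin (n + 1) → Fin (n + 1) → (Fin (n + 1) → ℝ) → ℂ)
    (hR : ∀ i j x, R i j x = -ν * (pdc p i x - pdc p j x) / ((x i : ℂ) - (x j : ℂ)))
    (heq : ∀ x ∈ Ω, ∀ i j : Fin (n + 1), i ≠ j → pdc (pdc p i) j x = R i j x)
    (x : Fin (n + 1) → ℝ) (hx : x ∈ Ω) (i j k : Fin (n + 1))
    (hij : i ≠ j) (hik : i ≠ k) (hjk : j ≠ k) :
    pdc (R i j) k x = -ν * (R i k x - R j k x) / ((x i : ℂ) - (x j : ℂ)) := by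
  have hne : ((x i : ℂ) - (x j : ℂ)) ≠ 0 := by
    rw [sub_ne_zero]
    exact_mod_cast hconf x hx i j hij
  -- differentiability of the first partials
  have hg2 : ∀ m : Fin (n + 1), ContDiffOn ℝ 2 (pdc p m) Ω := by
    intro m
    have h1 : ContDiffOn ℝ 2 (fun y => fderiv ℝ p y) Ω :=
      hp.fderiv_of_isOpen hΩ (by norm_num)
    exact h1.clm_apply contDiffOn_const
  have hdiff : ∀ m : Fin (n + 1), DifferentiableAt ℝ (pdc p m) x := fun m =>
    ((hg2 m).differentiableOn (by norm_num)).differentiableAt (hΩ.mem_nhds hx)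
  set Di := fderiv ℝ (pdc p i) x with hDi
  set Dj := fderiv ℝ (pdc p j) x with hDj
  have hnum : HasFDerivAt (fun y => -ν * (pdc p i y - pdc p j y)) ((-ν) • (Di - Dj)) x :=
    ((hdiff i).hasFDerivAt.sub (hdiff j).hasFDerivAt).const_mul (-ν)
  set Cd : (Fin (n + 1) → ℝ) →L[ℝ] ℂ :=
    Complex.ofRealCLM.comp (ContinuousLinearMap.proj i) -
      Complex.ofRealCLM.comp (ContinuousLinearMap.proj j) with hCd
  have hden : HasFDerivAt (fun y : Fin (n + 1) → ℝ => ((y i : ℂ) - (y j : ℂ))) Cd x :=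
    Cd.hasFDerivAt
  have hinv : HasFDerivAt (fun y : Fin (n + 1) → ℝ => ((y i : ℂ) - (y j : ℂ))⁻¹)
      ((-(((x i : ℂ) - (x j : ℂ)) ^ 2)⁻¹) • Cd) x :=
    (hasDerivAt_inv hne).comp_hasFDerivAt x hden
  have hF : HasFDerivAt (fun y => (-ν * (pdc p i y - pdc p j y)) * ((y i : ℂ) - (y j : ℂ))⁻¹)
      ((-ν * (pdc p i x - pdc p j x)) • ((-(((x i : ℂ) - (x j : ℂ)) ^ 2)⁻¹) • Cd) +
        (((x i : ℂ) - (x j : ℂ))⁻¹) • ((-ν) • (Di - Dj))) x :=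
    hnum.mul hinv
  have hRfun : R i j = fun y => (-ν * (pdc p i y - pdc p j y)) * ((y i : ℂ) - (y j : ℂ))⁻¹ := by
    funext y
    rw [hR i j y, div_eq_mul_inv]
  have hki : k ≠ i := hik.symm
  have hkj : k ≠ j := hjk.symm
  have hval : pdc (R i j) k x =
      ((-ν * (pdc p i x - pdc p j x)) • ((-(((x i : ℂ) - (x j : ℂ)) ^ 2)⁻¹) • Cd) +
        (((x i : ℂ) - (x j : ℂ))⁻¹) • ((-ν) • (Di - Dj))) (Pi.single k 1) := by
    rw [pdc, hRfun, hF.fderiv]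
  rw [hval]
  have hCdval : Cd (Pi.single k 1) = 0 := by
    simp [hCd, Pi.single_eq_of_ne hik, Pi.single_eq_of_ne hjk]
  have hDival : Di (Pi.single k 1) = R i k x := heq x hx i k hik
  have hDjval : Dj (Pi.single k 1) = R j k x := heq x hx j k hjk
  simp only [ContinuousLinearMap.add_apply, ContinuousLinearMap.smul_apply,
    ContinuousLinearMap.sub_apply, hCdval, hDival, hDjval, smul_zero, smul_eq_mul]
  rw [div_eq_mul_inv]
  ring

/-- Solutions of the Euler–Poisson–Darboux system
`∂ᵢ∂ⱼ p̃ = −(ν/(xᵢ−xⱼ))(∂ᵢp̃ − ∂ⱼp̃)` (for `i ≠ j`) on the configuration space of points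
with pairwise distinct coordinates form a compatible overdetermined system: for distinct
`i, j, k`, applying `∂ₖ` to the `(i,j)`-equation and `∂ⱼ` to the `(i,k)`-equation yields
the same expression for `∂ᵢ∂ⱼ∂ₖ p̃`. -/
theorem stmt_14 {n : ℕ} (hn : 2 ≤ n) (ν : ℂ)
    (Ω : Set (Fin (n + 1) → ℝ)) (hΩ : IsOpen Ω)
    (hconf : ∀ x ∈ Ω, ∀ i j : Fin (n + 1), i ≠ j → x i ≠ x j)
    (p : (Fin (n + 1) → ℝ) → ℂ) (hp : ContDiffOn ℝ 3 p Ω)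
    (R : Fin (n + 1) → Fin (n + 1) → (Fin (n + 1) → ℝ) → ℂ)
    (hR : ∀ i j x, R i j x = -ν * (pdc p i x - pdc p j x) / ((x i : ℂ) - (x j : ℂ)))
    (heq : ∀ x ∈ Ω, ∀ i j : Fin (n + 1), i ≠ j → pdc (pdc p i) j x = R i j x) :
    ∀ x ∈ Ω, ∀ i j k : Fin (n + 1), i ≠ j → j ≠ k → i ≠ k →
      pdc (R i j) k x = pdc (R i k) j x := by
  intro x hx i j k hij hjk hik
  have h1 := pdc_R_key ν Ω hΩ hconf p hp R hR heq x hx i j k hij hik hjk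
  have h2 := pdc_R_key ν Ω hΩ hconf p hp R hR heq x hx i k j hik hij hjk.symm
  rw [h1, h2]
  have huv : ((x i : ℂ) - (x j : ℂ)) ≠ 0 := by
    rw [sub_ne_zero]; exact_mod_cast hconf x hx i j hij
  have huw : ((x i : ℂ) - (x k : ℂ)) ≠ 0 := by
    rw [sub_ne_zero]; exact_mod_cast hconf x hx i k hik
  have hvw : ((x j : ℂ) - (x k : ℂ)) ≠ 0 := by
    rw [sub_ne_zero]; exact_mod_cast hconf x hx j k hjk
  have hwv : ((x k : ℂ) - (x j : ℂ)) ≠ 0 := by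
    rw [sub_ne_zero]; exact_mod_cast (hconf x hx j k hjk).symm
  have hvu : ((x j : ℂ) - (x i : ℂ)) ≠ 0 := by
    rw [sub_ne_zero]; exact_mod_cast (hconf x hx i j hij).symm
  simp only [hR]
  field_simp
  ring
end

section
/- Consider the multiplication on tangent vectors of ℝⁿ⁺¹ (coordinates x₀,…,xₙ, xᵢ pairwise distinct) defined by ∂ᵢ * ∂ⱼ = −((n+1)/2)(∂ᵢ − ∂ⱼ)/(xᵢ − xⱼ) for i ≠ j and ∂ᵢ * ∂ᵢ = −Σ_{j≠i} ∂ᵢ * ∂ⱼ. Then this multiplication is commutative and associative, and the vector field Σᵢ ∂ᵢ annihilates every vector: (Σᵢ ∂ᵢ) * v = 0 for all tangent vectors v. -/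
/-!
Writing `g p j = ((n + 1) / 2) / (x p - x j)`, the product has the coordinate form
`(u * v) p = ∑ j, g p j * (u p - u j) * (v p - v j)`. Commutativity and the annihilation by the
constant field are then visible. For associativity, the difference of the two bracketings at `p` is a
double sum over `j, k` whose `(j, k)` and `(k, j)` terms cancel as soon as the skew-symmetric
weights satisfy the Arnold relation `g p j g j k + g j k g k p + g k p g p j = 0` for distinct
`p, j, k`, which for `g i j = s / (x i - x j)` is a partial-fraction identity.
-/

open Finset

section EdgeMul

variable {ι R : Type*} [Fintype ι] [CommRing R]

def edgeMul (g : ι → ι → R) (u v : ι → R) : ι → R :=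
  fun p => ∑ j, g p j * ((u p - u j) * (v p - v j))

theorem edgeMul_comm (g : ι → ι → R) (u v : ι → R) : edgeMul g u v = edgeMul g v u := by
  funext p
  exact sum_congr rfl fun j _ => by ring

theorem edgeMul_const_left (g : ι → ι → R) (a : R) (v : ι → R) :
    edgeMul g (fun _ => a) v = 0 := by
  funext p
  simp [edgeMul]

theorem sum_sum_eq_zero_of_antisymm (F : ι → ι → R) (hF : ∀ j k, F j k + F k j = 0)
    (hdiag : ∀ j, F j j = 0) : ∑ j, ∑ k, F j k = 0 := by
  rw [← sum_product']
  refine sum_involution (fun jk _ => jk.swap) (fun jk _ => hF jk.1 jk.2) ?_ (by simp) (by simp)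
  rintro ⟨j, k⟩ _ hne hswap
  simp only [Prod.swap_prod_mk, Prod.mk.injEq] at hswap
  exact hne (hswap.1 ▸ hdiag k)

theorem edgeMul_assoc (g : ι → ι → R) (hskew : ∀ i j, g j i = -g i j)
    (harnold : ∀ i j k, i ≠ j → j ≠ k → i ≠ k →
      g i j * g j k + g j k * g k i + g k i * g i j = 0)
    (u v w : ι → R) : edgeMul g (edgeMul g u v) w = edgeMul g u (edgeMul g v w) := by
  funext p
  rw [← sub_eq_zero]
  set F : ι → ι → R := fun j k => g p j *
    ((g p k * ((u p - u k) * (v p - v k)) - g j k * ((u j - u k) * (v j - v k))) * (w p - w j)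
      - (u p - u j) * (g p k * ((v p - v k) * (w p - w k)) - g j k * ((v j - v k) * (w j - w k))))
    with hF
  have hexpand :
      edgeMul g (edgeMul g u v) w p - edgeMul g u (edgeMul g v w) p = ∑ j, ∑ k, F j k := by
    simp only [edgeMul, hF, ← sum_sub_distrib, mul_sum, sum_mul]
    exact sum_congr rfl fun j _ => sum_congr rfl fun k _ => by ring
  rw [hexpand]
  refine sum_sum_eq_zero_of_antisymm F (fun j k => ?_) (fun j => by simp only [hF]; ring)
  by_cases hpj : p = j
  · subst hpj; simp only [hF]; ring
  by_cases hpk : p = k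
  · subst hpk; simp only [hF]; ring
  by_cases hjk : j = k
  · subst hjk; simp only [hF]; ring
  have h := harnold p j k hpj hjk hpk
  rw [hskew p k] at h
  simp only [hF, hskew j k]
  linear_combination (v k - v j) * ((u p - u k) * (w p - w j) - (u p - u j) * (w p - w k)) * h

theorem sum_sum_smul_single_sub_single_apply [DecidableEq ι] (a : ι → ι → R) (p : ι) :
    (∑ i, ∑ j, a i j • (Pi.single j 1 - Pi.single i 1 : ι → R)) p = ∑ i, a i p - ∑ j, a p j := by
  simp only [Finset.sum_apply, Pi.smul_apply, Pi.sub_apply, Pi.single_apply, smul_eq_mul, mul_sub,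
    mul_ite, mul_one, mul_zero, sum_sub_distrib, sum_ite_eq, mem_univ, if_true, sum_ite_irrel,
    sum_const_zero]

theorem sum_sum_smul_eq_edgeMul [DecidableEq ι] (g : ι → ι → R) (hskew : ∀ i j, g j i = -g i j)
    (u v : ι → R) :
    ∑ i, ∑ j, (u i * v j) • (if i = j then -∑ k, g i k • (Pi.single k 1 - Pi.single i 1)
      else g i j • (Pi.single j 1 - Pi.single i 1) : ι → R) = edgeMul g u v := by
  set e : ι → ι → R := fun i => Pi.single i 1
  have hrow (i : ι) : ∑ j, (u i * v j) • (if i = j then -∑ k, g i k • (e k - e i)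
      else g i j • (e j - e i)) = ∑ j, (u i * (v j - v i) * g i j) • (e j - e i) := by
    have hdiag (j : ι) : (if i = j then -∑ k, g i k • (e k - e i) else g i j • (e j - e i))
        = g i j • (e j - e i) - if i = j then ∑ k, g i k • (e k - e i) else 0 := by
      split_ifs with h
      · subst h; simp
      · simp
    simp only [hdiag]
    simp only [smul_sub, smul_ite, smul_zero, sum_sub_distrib, sum_ite_eq, mem_univ, if_true,
      smul_sum]
    rw [sub_sub_sub_comm]
    simp only [← sum_sub_distrib]
    exact sum_congr rfl fun j _ => by module
  funext p
  rw [sum_congr rfl fun i _ => hrow i, sum_sum_smul_single_sub_single_apply, edgeMul,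
    ← sum_sub_distrib]
  exact sum_congr rfl fun j _ => by rw [hskew]; ring

end EdgeMul

theorem div_sub_arnold {K : Type*} [Field K] (s : K) {a b c : K}
    (hab : a ≠ b) (hbc : b ≠ c) (hac : a ≠ c) :
    s / (a - b) * (s / (b - c)) + s / (b - c) * (s / (c - a)) + s / (c - a) * (s / (a - b)) = 0 := by
  have := sub_ne_zero.2 hab
  have := sub_ne_zero.2 hbc
  have := sub_ne_zero.2 hac.symm
  field_simp
  ring

/-- The multiplication on tangent vectors of `ℝⁿ⁺¹` (at a point `x`
with pairwise distinct coordinates) defined by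
`∂ᵢ * ∂ⱼ = −((n+1)/2)(∂ᵢ − ∂ⱼ)/(xᵢ − xⱼ)` for `i ≠ j` and
`∂ᵢ * ∂ᵢ = −Σ_{j≠i} ∂ᵢ * ∂ⱼ` is commutative and associative, and the vector field
`Σᵢ ∂ᵢ` annihilates every vector. -/
theorem stmt_15 {n : ℕ} (x : Fin (n + 1) → ℝ)
    (hx : ∀ i j : Fin (n + 1), i ≠ j → x i ≠ x j)
    (base : Fin (n + 1) → Fin (n + 1) → (Fin (n + 1) → ℝ))
    (hbase : ∀ i j, base i j =
      if i = j then 0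
      else (-(((n : ℝ) + 1) / 2) / (x i - x j)) •
        ((Pi.single i 1 : Fin (n + 1) → ℝ) - (Pi.single j 1 : Fin (n + 1) → ℝ)))
    (c : Fin (n + 1) → Fin (n + 1) → (Fin (n + 1) → ℝ))
    (hc : ∀ i j, c i j = if i = j then -(∑ k, base i k) else base i j)
    (m : (Fin (n + 1) → ℝ) → (Fin (n + 1) → ℝ) → (Fin (n + 1) → ℝ))
    (hm : ∀ u v, m u v = ∑ i, ∑ j, (u i * v j) • c i j) :
    (∀ u v, m u v = m v u) ∧
    (∀ u v w, m (m u v) w = m u (m v w)) ∧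
    (∀ v, m (fun _ => 1) v = 0) := by
  set g : Fin (n + 1) → Fin (n + 1) → ℝ := fun i j => ((n + 1) / 2) / (x i - x j)
  have hskew (i j) : g j i = -g i j := by simp only [g]; rw [← neg_sub, div_neg]
  have harnold (i j k) (hij : i ≠ j) (hjk : j ≠ k) (hik : i ≠ k) :
      g i j * g j k + g j k * g k i + g k i * g i j = 0 :=
    div_sub_arnold _ (hx i j hij) (hx j k hjk) (hx i k hik)
  have hbase' (i j) : base i j = g i j • (Pi.single j 1 - Pi.single i 1) := by
    rw [hbase]
    split_ifs with h
    · simp [h]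
    · rw [neg_div, neg_smul, ← smul_neg, neg_sub]
  have hmul : m = edgeMul g := by
    funext u v
    rw [hm, ← sum_sum_smul_eq_edgeMul g hskew]
    simp only [hc, hbase']
  subst hmul
  exact ⟨edgeMul_comm g, edgeMul_assoc g hskew harnold, edgeMul_const_left g 1⟩
end
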